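/- Let A → B → E → 0 be an exact sequence of abelian groups and let ℓ be a prime number. If the quotient A/ℓA is finite, then the induced sequence A^(ℓ) → B^(ℓ) → E^(ℓ) → 0 of ℓ-adic completions is exact, i.e. the second map is surjective and the image of the first map equals the kernel of the second. (Lemma 'exactcomp' b), second case.) -/

import Mathlib

/-- The subgroup `nA = {n·a : a ∈ A}` of an abelian group `A`. -/
def nSub (A : Type*) [AddCommGroup A] (n : ℕ) : AddSubgroup A where
  carrier := Set.range fun a : A => n • a
  zero_mem' := ⟨0, smul_zero n⟩
  add_mem' := by rintro x y ⟨a, rfl⟩ ⟨b, rfl⟩; exact ⟨a + b, smul_add n a b⟩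
  neg_mem' := by rintro x ⟨a, rfl⟩; exact ⟨-a, smul_neg n a⟩

theorem nSub_le {A : Type*} [AddCommGroup A] {n m : ℕ} (h : n ∣ m) :
    nSub A m ≤ nSub A n := by
  rintro x ⟨a, rfl⟩
  obtain ⟨c, rfl⟩ := h
  exact ⟨c • a, (mul_smul n c a).symm⟩

/-- The natural projection `A/mA → A/nA` when `n ∣ m`. -/
def projMap {A : Type*} [AddCommGroup A] {n m : ℕ} (h : n ∣ m) :
    A ⧸ nSub A m →+ A ⧸ nSub A n :=
  QuotientAddGroup.map _ _ (AddMonoidHom.id A) fun _x hx => nSub_le h hx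

/-- The ℓ-adic completion `A^(ℓ) = lim_m A/ℓ^m A`, as the subgroup of compatible
families in `Π m, A/ℓ^m A` (along the natural projection maps). -/
def AdicComp (ℓ : ℕ) (A : Type*) [AddCommGroup A] :
    AddSubgroup (∀ m : ℕ, A ⧸ nSub A (ℓ ^ m)) where
  carrier := {f | ∀ m : ℕ, projMap (pow_dvd_pow ℓ (Nat.le_succ m)) (f (m + 1)) = f m}
  zero_mem' := fun _m => map_zero _
  add_mem' := by
    intro f g hf hg m
    simp only [Pi.add_apply, map_add, hf m, hg m]
  neg_mem' := by
    intro f hf m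
    simp only [Pi.neg_apply, map_neg, hf m]

/-- The map `A/nA → B/nB` induced by a homomorphism `φ : A → B`. -/
def qMap {A B : Type*} [AddCommGroup A] [AddCommGroup B] (φ : A →+ B) (n : ℕ) :
    A ⧸ nSub A n →+ B ⧸ nSub B n :=
  QuotientAddGroup.map _ _ φ (by rintro x ⟨a, rfl⟩; exact ⟨φ a, by simp⟩)

theorem projMap_qMap {A B : Type*} [AddCommGroup A] [AddCommGroup B] (φ : A →+ B)
    {n m : ℕ} (h : n ∣ m) (x : A ⧸ nSub A m) :
    projMap h (qMap φ m x) = qMap φ n (projMap h x) :=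
  QuotientAddGroup.induction_on x fun _a => rfl

/-- The homomorphism `A^(ℓ) → B^(ℓ)` between ℓ-adic completions induced by a
homomorphism `φ : A → B`. -/
def adicMap {A B : Type*} [AddCommGroup A] [AddCommGroup B] (ℓ : ℕ) (φ : A →+ B) :
    ↥(AdicComp ℓ A) →+ ↥(AdicComp ℓ B) where
  toFun f := ⟨fun m => qMap φ (ℓ ^ m) (f.1 m), fun m => by
    show projMap (pow_dvd_pow ℓ (Nat.le_succ m)) (qMap φ (ℓ ^ (m + 1)) (f.1 (m + 1)))
      = qMap φ (ℓ ^ m) (f.1 m)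
    rw [projMap_qMap, f.2 m]⟩
  map_zero' := by
    apply Subtype.ext; funext m; exact map_zero _
  map_add' f g := by
    apply Subtype.ext; funext m; exact map_add _ _ _

/-!
Modulo `ℓ^m` the sequence `A/ℓ^m → B/ℓ^m → E/ℓ^m → 0` stays exact (tensoring with `ℤ/ℓ^m` is
right exact), and `A/ℓ^m A` is finite, since each step `ℓ^k A/ℓ^(k+1) A` is a quotient of
`A/ℓA`. Hence an element of `E^(ℓ)`, or of the kernel of `B^(ℓ) → E^(ℓ)`, has at every level a
nonempty finite set of preimages (a coset of the image of `A/ℓ^m`, resp. a subset of `A/ℓ^m`),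
and these sets form an inverse system under the projections. An inverse limit of nonempty
finite sets is nonempty (König's lemma), and a point of it is a preimage in the completion.
-/

open CategoryTheory in
theorem exists_compatible_seq_of_finite {T : ℕ → Type*} [∀ m, Finite (T m)]
    [∀ m, Nonempty (T m)] (d : ∀ m, T (m + 1) → T m) :
    ∃ x : ∀ m, T m, ∀ m, d m (x (m + 1)) = x m := by
  let F : ℕᵒᵖ ⥤ Type _ := Functor.ofOpSequence fun m => TypeCat.ofHom (d m)
  have (j : ℕᵒᵖ) : Finite (F.obj j) := inferInstanceAs (Finite (T j.unop))
  have (j : ℕᵒᵖ) : Nonempty (F.obj j) := inferInstanceAs (Nonempty (T j.unop))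
  obtain ⟨u, hu⟩ := nonempty_sections_of_finite_inverse_system F
  refine ⟨fun m => u (Opposite.op m), fun m => ?_⟩
  have := hu (homOfLE (Nat.le_add_right m 1)).op
  rwa [Functor.ofOpSequence_map_homOfLE_succ] at this

theorem exists_compatible_lift {X Y : ℕ → Type*} (πX : ∀ m, X (m + 1) → X m)
    (πY : ∀ m, Y (m + 1) → Y m) (φ : ∀ m, X m → Y m)
    (hφ : ∀ m x, πY m (φ (m + 1) x) = φ m (πX m x))
    (y : ∀ m, Y m) (hy : ∀ m, πY m (y (m + 1)) = y m)
    (hne : ∀ m, (φ m ⁻¹' {y m}).Nonempty) (hfin : ∀ m, (φ m ⁻¹' {y m}).Finite) :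
    ∃ x : ∀ m, X m, (∀ m, πX m (x (m + 1)) = x m) ∧ ∀ m, φ m (x m) = y m := by
  have (m : ℕ) : Finite (φ m ⁻¹' {y m}) := (hfin m).to_subtype
  have (m : ℕ) : Nonempty (φ m ⁻¹' {y m}) := (hne m).to_subtype
  obtain ⟨x, hx⟩ := exists_compatible_seq_of_finite (T := fun m => φ m ⁻¹' {y m})
    fun m p => ⟨πX m p.1, by
      rw [Set.mem_preimage, Set.mem_singleton_iff, ← hφ, p.2, hy]⟩
  exact ⟨fun m => (x m).1, fun m => congrArg Subtype.val (hx m), fun m => (x m).2⟩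

theorem AddMonoidHom.finite_preimage_singleton_of_finite_ker {G H : Type*} [AddGroup G]
    [AddGroup H] (φ : G →+ H) (hker : (φ.ker : Set G).Finite) (y : H) :
    (φ ⁻¹' {y}).Finite := by
  rcases (φ ⁻¹' {y}).eq_empty_or_nonempty with h | ⟨x₀, hx₀⟩
  · simp [h]
  · refine (hker.image (x₀ + ·)).subset fun x hx =>
      ⟨-x₀ + x, ?_, add_neg_cancel_left x₀ x⟩
    simp_all [AddMonoidHom.mem_ker]

section Quotients

variable {A B E : Type*} [AddCommGroup A] [AddCommGroup B] [AddCommGroup E]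

theorem nSub_one : nSub A 1 = ⊤ :=
  eq_top_iff.mpr fun a _ => ⟨a, one_smul ℕ a⟩

theorem nSub_mul_finiteIndex {n k : ℕ} [(nSub A n).FiniteIndex] [(nSub A k).FiniteIndex] :
    (nSub A (n * k)).FiniteIndex := by
  have hrange : (nsmulAddMonoidHom n : A →+ A).range = nSub A n := rfl
  have hle : nSub A k ≤ (nSub A (n * k)).comap (nsmulAddMonoidHom n) := by
    rintro _ ⟨a, rfl⟩
    exact ⟨a, mul_smul n k a⟩
  -- `[nA : nkA]` is the index of the preimage of `nkA` under `n • ·`, which contains `kA`.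
  have hrel : (nSub A (n * k)).relIndex (nSub A n)
      = ((nSub A (n * k)).comap (nsmulAddMonoidHom n)).index := by
    rw [← hrange, AddMonoidHom.range_eq_map, ← AddSubgroup.relIndex_comap,
      AddSubgroup.relIndex_top_right]
  rw [AddSubgroup.finiteIndex_iff, ← AddSubgroup.relIndex_mul_index (nSub_le (dvd_mul_right n k)),
    hrel]
  exact mul_ne_zero (AddSubgroup.finiteIndex_of_le hle).index_ne_zero
    AddSubgroup.FiniteIndex.index_ne_zero

theorem nSub_pow_finiteIndex (ℓ : ℕ) [(nSub A ℓ).FiniteIndex] (m : ℕ) :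
    (nSub A (ℓ ^ m)).FiniteIndex := by
  induction m with
  | zero => rw [pow_zero, nSub_one]; infer_instance
  | succ m ih => rw [pow_succ]; exact nSub_mul_finiteIndex

theorem qMap_surjective {g : B →+ E} (hg : Function.Surjective g) (n : ℕ) :
    Function.Surjective (qMap g n) :=
  .of_comp (g := QuotientAddGroup.mk) (QuotientAddGroup.mk_surjective.comp hg)

theorem qMap_exact {f : A →+ B} {g : B →+ E} (hfg : Function.Exact f g)
    (hg : Function.Surjective g) (n : ℕ) : Function.Exact (qMap f n) (qMap g n) := by
  intro y
  induction y using QuotientAddGroup.induction_on with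
  | H b =>
    constructor
    · intro hb
      obtain ⟨e, he⟩ := (QuotientAddGroup.eq_zero_iff _).mp hb
      obtain ⟨b', rfl⟩ := hg e
      replace he : n • g b' = g b := he
      have hker : g (b - n • b') = 0 := by rw [map_sub, map_nsmul, he, sub_self]
      obtain ⟨a, ha⟩ := (hfg _).mp hker
      refine ⟨a, QuotientAddGroup.eq_iff_sub_mem.mpr ⟨-b', ?_⟩⟩
      simp only [ha, smul_neg, sub_sub_cancel_left]
    · rintro ⟨x, hx⟩
      rw [← hx]
      induction x using QuotientAddGroup.induction_on with
      | H a => exact congrArg _ (hfg.apply_apply_eq_zero a)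

theorem mem_range_adicMap_of_finite_fibers (ℓ : ℕ) (φ : A →+ B) (y : AdicComp ℓ B)
    (hne : ∀ m, (qMap φ (ℓ ^ m) ⁻¹' {y.1 m}).Nonempty)
    (hfin : ∀ m, (qMap φ (ℓ ^ m) ⁻¹' {y.1 m}).Finite) :
    y ∈ Set.range (adicMap ℓ φ) := by
  obtain ⟨x, hx, hφx⟩ := exists_compatible_lift (fun m => projMap (pow_dvd_pow ℓ m.le_succ))
    (fun m => projMap (pow_dvd_pow ℓ m.le_succ)) (fun m => qMap φ (ℓ ^ m))
    (fun m => projMap_qMap φ _) y.1 (fun m => y.2 m) hne hfin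
  exact ⟨⟨x, hx⟩, Subtype.ext (funext hφx)⟩

end Quotients

theorem statement_2_general {A B E : Type*} [AddCommGroup A] [AddCommGroup B] [AddCommGroup E]
    (ℓ : ℕ) (f : A →+ B) (g : B →+ E)
    (hfg : Function.Exact ⇑f ⇑g) (hg : Function.Surjective ⇑g)
    (hquot : Finite (A ⧸ nSub A ℓ)) :
    Function.Surjective ⇑(adicMap ℓ g) ∧
      Function.Exact ⇑(adicMap ℓ f) ⇑(adicMap ℓ g) := by
  have := AddSubgroup.finiteIndex_of_finite_quotient (H := nSub A ℓ)
  have (m : ℕ) := nSub_pow_finiteIndex (A := A) ℓ m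
  have hexact := qMap_exact hfg hg
  refine ⟨fun e => ?_, fun y => ⟨fun hy => ?_, ?_⟩⟩
  · refine mem_range_adicMap_of_finite_fibers ℓ g e (fun m => qMap_surjective hg _ (e.1 m))
      fun m => (qMap g _).finite_preimage_singleton_of_finite_ker ?_ _
    rw [(hexact _).addMonoidHom_ker_eq]
    exact Set.finite_range _
  · have hy (m : ℕ) : qMap g (ℓ ^ m) (y.1 m) = 0 := congrFun (congrArg Subtype.val hy) m
    exact mem_range_adicMap_of_finite_fibers ℓ f y (fun m => (hexact _ _).mp (hy m))
      fun m => Set.toFinite _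
  · rintro ⟨a, rfl⟩
    exact Subtype.ext (funext fun m => (hexact _).apply_apply_eq_zero (a.1 m))

/-- If `A → B → E → 0` is an exact sequence of abelian groups, `ℓ` is a prime and the
quotient `A/ℓA` is finite, then the induced sequence `A^(ℓ) → B^(ℓ) → E^(ℓ) → 0` of
ℓ-adic completions is exact: the second map is surjective and the image of the first
map equals the kernel of the second. -/
theorem statement_2 {A B E : Type*} [AddCommGroup A] [AddCommGroup B] [AddCommGroup E]
    (ℓ : ℕ) (hℓ : ℓ.Prime) (f : A →+ B) (g : B →+ E)
    (hfg : Function.Exact ⇑f ⇑g) (hg : Function.Surjective ⇑g)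
    (hquot : Finite (A ⧸ nSub A ℓ)) :
    Function.Surjective ⇑(adicMap ℓ g) ∧
      Function.Exact ⇑(adicMap ℓ f) ⇑(adicMap ℓ g) :=
  statement_2_general ℓ f g hfg hg hquot
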